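/- arXiv:2312.16043 — 7 statements merged into one kernel-verified Lean document; each statement's English description precedes it below -/
import Mathlib

section
/- Let {x_i}_{i∈N+} and {x_j}_{j∈N-} be finite nonempty families of vectors in ℝ^s satisfying the mean-zero normalization Σ_{i∈N+} x_i + Σ_{j∈N-} x_j = 0, with both centroids x_p^c and x_n^c nonzero. If the scale-class-imbalance ratio r_sc = r_c · √((‖x_p^c‖²+1)/(‖x_n^c‖²+1)) is not equal to 1, then |r_sc − 1| < |r_c − 1|, where r_c = |N+|/|N-|. -/
set_option maxHeartbeats 800000


/-- Under mean-zero normalization with nonzero centroids, if the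
scale-class-imbalance ratio `r_sc = r_c · √((‖x_p^c‖²+1)/(‖x_n^c‖²+1))` differs
from `1`, then `|r_sc − 1| < |r_c − 1|`. -/
theorem sigtron_stmt2 {s : ℕ} {ιp ιn : Type*} [Fintype ιp] [Fintype ιn]
    [Nonempty ιp] [Nonempty ιn]
    (xp : ιp → EuclideanSpace ℝ (Fin s)) (xn : ιn → EuclideanSpace ℝ (Fin s))
    (hmean : (∑ i, xp i) + (∑ j, xn j) = 0)
    (xpc xnc : EuclideanSpace ℝ (Fin s))
    (hxpc : xpc = ((Fintype.card ιp : ℝ))⁻¹ • ∑ i, xp i)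
    (hxnc : xnc = ((Fintype.card ιn : ℝ))⁻¹ • ∑ j, xn j)
    (hp : xpc ≠ 0) (hn : xnc ≠ 0)
    (rc : ℝ) (hrc : rc = (Fintype.card ιp : ℝ) / (Fintype.card ιn : ℝ))
    (rsc : ℝ) (hrsc : rsc = rc * Real.sqrt ((‖xpc‖ ^ 2 + 1) / (‖xnc‖ ^ 2 + 1)))
    (h1 : rsc ≠ 1) :
    |rsc - 1| < |rc - 1| := by
  have hPpos : (0:ℝ) < (Fintype.card ιp : ℝ) := by
    exact_mod_cast Fintype.card_pos
  have hNpos : (0:ℝ) < (Fintype.card ιn : ℝ) := by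
    exact_mod_cast Fintype.card_pos
  set P : ℝ := (Fintype.card ιp : ℝ)
  set N : ℝ := (Fintype.card ιn : ℝ)
  set a : ℝ := ‖∑ i, xp i‖ with ha
  have hapos : 0 < a := by
    rw [ha, norm_pos_iff]
    intro h
    apply hp
    rw [hxpc, h, smul_zero]
  have hnsum : (∑ j, xn j) = -(∑ i, xp i) := by
    linear_combination (norm := abel) hmean
  have hnormp : ‖xpc‖ = P⁻¹ * a := by
    rw [hxpc, norm_smul, Real.norm_eq_abs, abs_of_pos (by positivity)]
  have hnormn : ‖xnc‖ = N⁻¹ * a := by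
    rw [hxnc, hnsum, norm_smul, norm_neg, Real.norm_eq_abs, abs_of_pos (by positivity)]
  -- key: rsc = sqrt ((a^2+P^2)/(a^2+N^2))
  have harg : (‖xpc‖ ^ 2 + 1) / (‖xnc‖ ^ 2 + 1)
      = (N/P)^2 * ((a^2 + P^2)/(a^2 + N^2)) := by
    rw [hnormp, hnormn]
    field_simp
  have hrsc' : rsc = Real.sqrt ((a^2 + P^2)/(a^2 + N^2)) := by
    rw [hrsc, harg, Real.sqrt_mul (by positivity), Real.sqrt_sq (by positivity), hrc]
    field_simp
  have hrscpos : 0 < rsc := by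
    rw [hrsc']; positivity
  have hrscsq : rsc ^ 2 = (a^2 + P^2)/(a^2 + N^2) := by
    rw [hrsc', Real.sq_sqrt (by positivity)]
  have hrcpos : 0 < rc := by rw [hrc]; positivity
  rcases lt_trichotomy P N with h | h | h
  · -- P < N : rc < 1, rc < rsc < 1
    have hrc1 : rc < 1 := by rw [hrc]; exact (div_lt_one hNpos).2 h
    have hsq1 : rsc ^ 2 < 1 := by
      rw [hrscsq, div_lt_one (by positivity)]
      have h2 : P ^ 2 < N ^ 2 := by nlinarith
      linarith
    have hrsc1 : rsc < 1 := by
      have h12 : rsc ^ 2 < 1 ^ 2 := by simpa using hsq1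
      simpa using lt_of_pow_lt_pow_left₀ 2 zero_le_one h12
    have hlt : rc < rsc := by
      have h2 : rc ^ 2 < rsc ^ 2 := by
        rw [hrscsq, hrc, div_pow, div_lt_div_iff₀ (by positivity) (by positivity)]
        nlinarith [mul_pos hapos hapos, mul_pos (mul_pos hapos hapos) (mul_pos (sub_pos.2 h) (by positivity : (0:ℝ) < N + P))]
      exact lt_of_pow_lt_pow_left₀ 2 hrscpos.le h2
    rw [abs_of_nonpos (by linarith), abs_of_nonpos (by linarith)]
    linarith
  · exfalso
    apply h1
    rw [hrsc', h, div_self (by positivity : (a ^ 2 + N ^ 2) ≠ 0), Real.sqrt_one]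
  · -- N < P : 1 < rsc < rc
    have hrc1 : 1 < rc := by rw [hrc]; exact (one_lt_div hNpos).2 h
    have hsq1 : 1 < rsc ^ 2 := by
      rw [hrscsq, lt_div_iff₀ (by positivity)]
      have h2 : N ^ 2 < P ^ 2 := by nlinarith
      linarith
    have hrsc1 : 1 < rsc := by
      have h12 : 1 ^ 2 < rsc ^ 2 := by simpa using hsq1
      simpa using lt_of_pow_lt_pow_left₀ 2 hrscpos.le h12
    have hlt : rsc < rc := by
      have h2 : rsc ^ 2 < rc ^ 2 := by
        rw [hrscsq, hrc, div_pow, div_lt_div_iff₀ (by positivity) (by positivity)]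
        nlinarith [mul_pos hapos hapos, mul_pos (mul_pos hapos hapos) (mul_pos (sub_pos.2 h) (by positivity : (0:ℝ) < P + N))]
      exact lt_of_pow_lt_pow_left₀ 2 hrcpos.le h2
    rw [abs_of_pos (by linarith), abs_of_pos (by linarith)]
    linarith
end

section
/- For every α ∈ [0,2], c > 0, and x ∈ ℝ, the SIGTRON function satisfies the extended symmetric property s_{α,c}(x) = 1 − s_{2−α, 1/c}(−x). -/
/-- `c_α = c^{1−α}/(α−1)` (real power). -/
noncomputable def cA (α c : ℝ) : ℝ := c ^ (1 - α) / (α - 1)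

/-- SIGTRON: extended asymmetric sigmoid with Perceptron. -/
noncomputable def sigtron (α c : ℝ) (x : ℝ) : ℝ :=
  if α = 1 then 1 / (1 + Real.exp (-x))
  else if α < 1 then
    if x ≤ -(cA α c) then 1 / (1 + (1 + x / cA α c) ^ ((1 : ℝ) / (1 - α))) else 1
  else
    if -(cA α c) < x then 1 / (1 + (1 + x / cA α c) ^ ((1 : ℝ) / (1 - α))) else 0

/-! For `α < 1` put `b = c_α < 0` and `p = 1/(1-α)`. Passing to `(2 - α, 1/c)` negates both
`c_α` and the exponent, so on `x < -b` the two sides read `1/(1 + t)` and `1 - 1/(1 + t⁻¹)` with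
`t = (1 + x/b)^p > 0`, while for `x ≥ -b` both sides equal `1` (at `x = -b` because `0^p = 0`). The case `α > 1` is the
case `α < 1` applied to `(2 - α, 1/c, -x)`, and `α = 1` is the usual symmetry of the logistic
function. -/

lemma one_div_one_add_inv {t : ℝ} (ht : 0 < t) : 1 / (1 + t⁻¹) = 1 - 1 / (1 + t) := by
  field_simp
  ring

lemma cA_two_sub_one_div (α : ℝ) {c : ℝ} (hc : 0 < c) : cA (2 - α) (1 / c) = -cA α c := by
  rw [cA, cA, one_div, Real.inv_rpow hc.le, ← Real.rpow_neg hc.le,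
    show -(1 - (2 - α)) = 1 - α by ring, show 2 - α - 1 = -(α - 1) by ring, div_neg]

lemma cA_neg_of_lt_one {α c : ℝ} (hα : α < 1) (hc : 0 < c) : cA α c < 0 :=
  div_neg_of_pos_of_neg (Real.rpow_pos_of_pos hc _) (by linarith)

lemma sigtron_one (c x : ℝ) : sigtron 1 c x = 1 / (1 + Real.exp (-x)) := if_pos rfl

lemma sigtron_eq_one_sub_sigtron_of_lt_one {α c : ℝ} (hα : α < 1) (hc : 0 < c) (x : ℝ) :
    sigtron α c x = 1 - sigtron (2 - α) (1 / c) (-x) := by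
  have hb := cA_neg_of_lt_one hα hc
  have hexp : (1 : ℝ) / (1 - (2 - α)) = -(1 / (1 - α)) := by
    rw [show 1 - (2 - α) = -(1 - α) by ring, div_neg]
  simp only [sigtron, if_neg hα.ne, if_pos hα, if_neg (show 2 - α ≠ 1 by linarith),
    if_neg (show ¬2 - α < 1 by linarith), cA_two_sub_one_div α hc, neg_neg, neg_div_neg_eq, hexp]
  set b := cA α c
  rcases lt_trichotomy x (-b) with hx | rfl | hx
  · have hbase : 0 < 1 + x / b := by
      have : -1 < x / b := by rw [lt_div_iff_of_neg hb]; linarith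
      linarith
    rw [if_pos hx.le, if_pos (by linarith), Real.rpow_neg hbase.le,
      one_div_one_add_inv (Real.rpow_pos_of_pos hbase _)]
    ring
  · have hp : 1 / (1 - α) ≠ 0 := one_div_ne_zero (by linarith)
    rw [if_pos le_rfl, neg_neg, if_neg (lt_irrefl b), neg_div_self hb.ne, add_neg_cancel,
      Real.zero_rpow hp]
    norm_num
  · rw [if_neg hx.not_ge, if_neg (by linarith)]
    norm_num

theorem sigtron_stmt5_general (α c : ℝ) (hc : 0 < c) (x : ℝ) :
    sigtron α c x = 1 - sigtron (2 - α) (1 / c) (-x) := by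
  rcases lt_trichotomy α 1 with hα | rfl | hα
  · exact sigtron_eq_one_sub_sigtron_of_lt_one hα hc x
  · rw [show (2 : ℝ) - 1 = 1 by norm_num, sigtron_one, sigtron_one, neg_neg, Real.exp_neg,
      one_div_one_add_inv (Real.exp_pos x)]
  · have h := sigtron_eq_one_sub_sigtron_of_lt_one (show 2 - α < 1 by linarith)
      (one_div_pos.2 hc) (-x)
    rw [sub_sub_cancel, one_div_one_div, neg_neg] at h
    linarith

/-- For every `α ∈ [0,2]`, `c > 0` and `x ∈ ℝ`, SIGTRON satisfies
the extended symmetric property `s_{α,c}(x) = 1 − s_{2−α,1/c}(−x)`. -/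
theorem sigtron_stmt5 (α c : ℝ) (hα : α ∈ Set.Icc (0 : ℝ) 2) (hc : 0 < c) (x : ℝ) :
    sigtron α c x = 1 - sigtron (2 - α) (1 / c) (-x) :=
  sigtron_stmt5_general α c hc x
end

section
/- For every α ∈ (0,2) and c > 0, the SIGTRON function s_{α,c} is differentiable at every x ∈ ℝ, and its derivative is given by s_{α,c}'(x) = c^{α−1} · (1 − s_{α,c}(x))^α · (s_{α,c}(x))^{2−α} for all x ∈ ℝ. -/
/-! For `α ≠ 1` put `t = 1 + x / c_α` and `w = (max t 0) ^ r` with `r = 1 / |1 - α|`. Then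
`s = 1 / (1 + w)` for `α < 1` and `s = 1 - 1 / (1 + w)` for `α > 1`; the constant pieces of the
definition are exactly where `max t 0 = 0`. Since `α ∈ (0, 2)` forces `r > 1`, the ramp power
`y ↦ (max y 0) ^ r` is differentiable everywhere with derivative `r (max y 0) ^ (r - 1)`, so the
chain rule applies across the kink at `x = -c_α` as well. The formula then follows from
`(max t 0) ^ (r - 1) = w ^ α` (resp. `w ^ (2 - α)`) and
`(w / (1 + w)) ^ β (1 / (1 + w)) ^ (2 - β) = w ^ β / (1 + w) ^ 2`. -/

open Real Set Filter Topology

theorem hasDerivAt_max_zero_rpow {r : ℝ} (hr : 1 < r) (y : ℝ) :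
    HasDerivAt (fun y => max y 0 ^ r) (r * max y 0 ^ (r - 1)) y := by
  have hr0 : r ≠ 0 := by positivity
  have hr1 : r - 1 ≠ 0 := sub_ne_zero.2 hr.ne'
  rcases lt_trichotomy y 0 with hy | rfl | hy
  · have hzero : (fun y => max y 0 ^ r) =ᶠ[𝓝 y] fun _ => 0 := by
      filter_upwards [Iio_mem_nhds hy] with z hz
      rw [max_eq_right hz.le, zero_rpow hr0]
    rw [max_eq_right hy.le, zero_rpow hr1, mul_zero]
    exact (hasDerivAt_const y 0).congr_of_eventuallyEq hzero
  · rw [max_self, zero_rpow hr1, mul_zero]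
    have hleft : HasDerivWithinAt (fun y : ℝ => max y 0 ^ r) 0 (Iic 0) 0 :=
      (hasDerivWithinAt_const 0 _ 0).congr_of_mem
        (fun z hz => by rw [max_eq_right hz, zero_rpow hr0]) self_mem_Iic
    have hright : HasDerivWithinAt (fun y : ℝ => max y 0 ^ r) 0 (Ici 0) 0 := by
      have := (hasDerivAt_rpow_const (x := 0) (Or.inr hr.le)).hasDerivWithinAt (s := Ici 0)
      rw [zero_rpow hr1, mul_zero] at this
      exact this.congr_of_mem (fun z hz => by rw [max_eq_left hz]) self_mem_Ici
    simpa only [Iic_union_Ici, hasDerivWithinAt_univ] using hleft.union hright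
  · have hid : (fun y => max y 0 ^ r) =ᶠ[𝓝 y] fun y => y ^ r := by
      filter_upwards [Ioi_mem_nhds hy] with z hz
      rw [max_eq_left hz.le]
    rw [max_eq_left hy.le]
    exact (hasDerivAt_rpow_const (Or.inl hy.ne')).congr_of_eventuallyEq hid

theorem hasDerivAt_inv_one_add_max_rpow {r : ℝ} (hr : 1 < r) (a x : ℝ) :
    HasDerivAt (fun x => (1 + max (1 + x / a) 0 ^ r)⁻¹)
      (-(r * max (1 + x / a) 0 ^ (r - 1) * a⁻¹) / (1 + max (1 + x / a) 0 ^ r) ^ 2) x := by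
  have hlin : HasDerivAt (fun x => 1 + x / a) a⁻¹ x := by
    simpa only [one_div] using ((hasDerivAt_id' x).div_const a).const_add 1
  have hpos : 0 < 1 + max (1 + x / a) 0 ^ r := by
    have := rpow_nonneg (le_max_right (1 + x / a) 0) r
    linarith
  exact (((hasDerivAt_max_zero_rpow hr _).comp x hlin).const_add 1).fun_inv hpos.ne'

theorem div_one_add_rpow_mul_inv_one_add_rpow {w : ℝ} (hw : 0 ≤ w) (β : ℝ) :
    (w / (1 + w)) ^ β * (1 + w)⁻¹ ^ (2 - β) = w ^ β / (1 + w) ^ 2 := by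
  have hw1 : 0 < 1 + w := by linarith
  have hsum : (1 + w) ^ β * (1 + w) ^ (2 - β) = (1 + w) ^ 2 := by
    rw [← rpow_add hw1, add_sub_cancel, rpow_two]
  rw [div_rpow hw hw1.le, inv_rpow hw1.le, ← hsum]
  field_simp

theorem inv_sub_one_div_cA {α c : ℝ} (hα : α ≠ 1) (hc : 0 ≤ c) :
    (α - 1)⁻¹ / cA α c = c ^ (α - 1) := by
  have hα1 : α - 1 ≠ 0 := sub_ne_zero.2 hα
  rw [cA, show α - 1 = -(1 - α) by ring, rpow_neg hc]
  field_simp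

theorem sigtron_of_lt_one {α c : ℝ} (hα : α < 1) (hc : 0 < c) :
    sigtron α c = fun x => (1 + max (1 + x / cA α c) 0 ^ (1 - α)⁻¹)⁻¹ := by
  have hcA : cA α c < 0 := div_neg_of_pos_of_neg (rpow_pos_of_pos hc _) (by linarith)
  funext x
  simp only [sigtron, if_neg hα.ne, if_pos hα, one_div]
  split_ifs with hx
  · rw [max_eq_left]
    have : -1 ≤ x / cA α c := by rw [le_div_iff_of_neg hcA]; linarith
    linarith
  · have : x / cA α c < -1 := by rw [div_lt_iff_of_neg hcA]; linarith
    rw [max_eq_right (by linarith), zero_rpow (inv_ne_zero (by linarith)), add_zero, inv_one]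

theorem sigtron_of_one_lt {α c : ℝ} (hα : 1 < α) (hc : 0 < c) :
    sigtron α c = fun x => 1 - (1 + max (1 + x / cA α c) 0 ^ (α - 1)⁻¹)⁻¹ := by
  have hcA : 0 < cA α c := div_pos (rpow_pos_of_pos hc _) (by linarith)
  funext x
  simp only [sigtron, if_neg hα.ne', if_neg (not_lt.2 hα.le), one_div]
  split_ifs with hx
  · have ht : 0 < 1 + x / cA α c := by
      have : -1 < x / cA α c := by rw [lt_div_iff₀ hcA]; linarith
      linarith
    have hu : 0 < (1 + x / cA α c) ^ (α - 1)⁻¹ := rpow_pos_of_pos ht _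
    rw [max_eq_left ht.le, show (1 - α)⁻¹ = -(α - 1)⁻¹ by rw [← neg_sub, inv_neg], rpow_neg ht.le]
    generalize (1 + x / cA α c) ^ (α - 1)⁻¹ = u at hu ⊢
    field_simp
    ring
  · have : x / cA α c ≤ -1 := by rw [div_le_iff₀ hcA]; linarith
    rw [max_eq_right (by linarith), zero_rpow (inv_ne_zero (by linarith)), add_zero, inv_one,
      sub_self]

theorem sigtron_one_s6 (c : ℝ) : sigtron 1 c = fun x => (1 + exp (-x))⁻¹ := by
  funext x
  simp only [sigtron, if_pos, one_div]

theorem hasDerivAt_sigtron_one (c x : ℝ) :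
    HasDerivAt (sigtron 1 c)
      (c ^ ((1 : ℝ) - 1) * (1 - sigtron 1 c x) ^ (1 : ℝ) * sigtron 1 c x ^ (2 - (1 : ℝ))) x := by
  have hexp : HasDerivAt (fun x => exp (-x)) (-exp (-x)) x := by
    simpa using (hasDerivAt_neg x).exp
  rw [sigtron_one_s6]
  refine ((hexp.const_add 1).fun_inv (by positivity)).congr_deriv ?_
  simp only [sub_self, rpow_zero, rpow_one, one_mul, show (2 : ℝ) - 1 = 1 by norm_num]
  field_simp
  ring

theorem hasDerivAt_sigtron_of_lt_one {α c : ℝ} (hα0 : 0 < α) (hα1 : α < 1) (hc : 0 < c) (x : ℝ) :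
    HasDerivAt (sigtron α c)
      (c ^ (α - 1) * (1 - sigtron α c x) ^ α * sigtron α c x ^ (2 - α)) x := by
  have hr : 1 < (1 - α)⁻¹ := one_lt_inv₀ (by linarith) |>.2 (by linarith)
  rw [sigtron_of_lt_one hα1 hc]
  refine (hasDerivAt_inv_one_add_max_rpow hr (cA α c) x).congr_deriv ?_
  beta_reduce
  set m := max (1 + x / cA α c) 0
  set w := m ^ (1 - α)⁻¹
  have hm : 0 ≤ m := le_max_right _ _
  have hw : 0 ≤ w := rpow_nonneg hm _
  have hexp : m ^ ((1 - α)⁻¹ - 1) = w ^ α := by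
    have h1α : 1 - α ≠ 0 := by linarith
    rw [← rpow_mul hm]; congr 1; field_simp; ring
  have hcoef : (1 - α)⁻¹ * (cA α c)⁻¹ = -c ^ (α - 1) := by
    rw [← inv_sub_one_div_cA hα1.ne hc.le, ← neg_sub, inv_neg]; ring
  have hsub : 1 - (1 + w)⁻¹ = w / (1 + w) := by field_simp; ring
  rw [hsub, hexp, mul_assoc (c ^ (α - 1)), div_one_add_rpow_mul_inv_one_add_rpow hw]
  linear_combination -(w ^ α / (1 + w) ^ 2) * hcoef

theorem hasDerivAt_sigtron_of_one_lt {α c : ℝ} (hα1 : 1 < α) (hα2 : α < 2) (hc : 0 < c) (x : ℝ) :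
    HasDerivAt (sigtron α c)
      (c ^ (α - 1) * (1 - sigtron α c x) ^ α * sigtron α c x ^ (2 - α)) x := by
  have hr : 1 < (α - 1)⁻¹ := one_lt_inv₀ (by linarith) |>.2 (by linarith)
  rw [sigtron_of_one_lt hα1 hc]
  refine ((hasDerivAt_inv_one_add_max_rpow hr (cA α c) x).const_sub 1).congr_deriv ?_
  beta_reduce
  set m := max (1 + x / cA α c) 0
  set w := m ^ (α - 1)⁻¹
  have hm : 0 ≤ m := le_max_right _ _
  have hw : 0 ≤ w := rpow_nonneg hm _
  have hexp : m ^ ((α - 1)⁻¹ - 1) = w ^ (2 - α) := by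
    have hα1' : α - 1 ≠ 0 := by linarith
    rw [← rpow_mul hm]; congr 1; field_simp; ring
  have hcoef : (α - 1)⁻¹ * (cA α c)⁻¹ = c ^ (α - 1) := inv_sub_one_div_cA hα1.ne' hc.le
  have hsub : 1 - (1 + w)⁻¹ = w / (1 + w) := by field_simp; ring
  have hprod := div_one_add_rpow_mul_inv_one_add_rpow hw (2 - α)
  rw [sub_sub_cancel] at hprod
  rw [sub_sub_cancel, hsub, hexp, mul_assoc (c ^ (α - 1)), mul_comm ((1 + w)⁻¹ ^ α), hprod]
  linear_combination (w ^ (2 - α) / (1 + w) ^ 2) * hcoef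

/-- For every `α ∈ (0,2)` and `c > 0`, SIGTRON is differentiable at
every `x ∈ ℝ` with derivative `c^{α−1}·(1 − s_{α,c}(x))^α·(s_{α,c}(x))^{2−α}`. -/
theorem sigtron_stmt6 (α c : ℝ) (hα : α ∈ Set.Ioo (0 : ℝ) 2) (hc : 0 < c) (x : ℝ) :
    HasDerivAt (sigtron α c)
      (c ^ (α - 1) * (1 - sigtron α c x) ^ α * (sigtron α c x) ^ (2 - α)) x := by
  obtain ⟨hα0, hα2⟩ := hα
  rcases lt_trichotomy α 1 with hα1 | rfl | hα1
  · exact hasDerivAt_sigtron_of_lt_one hα0 hα1 hc x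
  · exact hasDerivAt_sigtron_one c x
  · exact hasDerivAt_sigtron_of_one_lt hα1 hα2 hc x
end

section
/- Fix a ∈ ℝ and define coefficients B(n,k) ∈ ℝ for n ≥ 1, 0 ≤ k ≤ n+1 by: B(1,1) = −a; B(n,0) = 0 and B(n,k) = 0 for k > n; and B(n+1,k) = (−k·a)·B(n,k−1) + (k·a − n)·B(n,k) for 1 ≤ k ≤ n+1. Then for every n ≥ 1 and every y > 0, the n-th derivative (taken within the interval (0,∞)) of the function g(y) = 1/(1 + y^a) satisfies g^{(n)}(y) = Σ_{k=1}^{n} B(n,k) · y^{a·k − n} / (1 + y^a)^{k+1}. -/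
/-!
Write `T n k y = y^(a k - n) / (1 + y^a)^(k+1)`. The quotient rule gives
`(T n k)' = (a k - n) T (n+1) k - (k+1) a T (n+1) (k+1)`, so differentiating `∑ B n k T n k` and
collecting the coefficient of `T (n+1) k` reproduces exactly the recurrence for `B (n+1) k`;
the boundary terms vanish because `B n 0 = B n (n+1) = 0`. The induction starts from
`g = T 0 0`, whose derivative is `-a T 1 1`.
-/

open Real Finset

noncomputable def sigtronTerm (a : ℝ) (n k : ℕ) (t : ℝ) : ℝ :=
  t ^ (a * k - n) / (1 + t ^ a) ^ (k + 1)

theorem hasDerivAt_sigtronTerm (a : ℝ) (n k : ℕ) {y : ℝ} (hy : 0 < y) :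
    HasDerivAt (sigtronTerm a n k)
      ((a * k - n) * sigtronTerm a (n + 1) k y - (k + 1) * a * sigtronTerm a (n + 1) (k + 1) y)
      y := by
  have hu : 0 < 1 + y ^ a := by positivity
  have hnum : HasDerivAt (fun t : ℝ => t ^ (a * k - n)) ((a * k - n) * y ^ (a * k - n - 1)) y :=
    hasDerivAt_rpow_const (Or.inl hy.ne')
  have hden : HasDerivAt (fun t : ℝ => (1 + t ^ a) ^ (k + 1))
      ((k + 1 : ℕ) * (1 + y ^ a) ^ k * (a * y ^ (a - 1))) y :=
    ((hasDerivAt_rpow_const (Or.inl hy.ne')).const_add 1).pow (k + 1)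
  refine (hnum.div hden (pow_ne_zero _ hu.ne')).congr_deriv ?_
  have hpow_succ : y ^ (a * k - n) = y ^ (a * k - n - 1) * y := by
    rw [← rpow_add_one hy.ne']; ring_nf
  have hpow_top : y ^ (a * ((k + 1 : ℕ) : ℝ) - ((n + 1 : ℕ) : ℝ))
      = y ^ (a * k - n - 1) * y * y ^ (a - 1) := by
    rw [← rpow_add_one hy.ne', ← rpow_add hy]; push_cast; ring_nf
  have hpow_same : y ^ (a * k - ((n + 1 : ℕ) : ℝ)) = y ^ (a * k - n - 1) := by
    push_cast; ring_nf
  simp only [sigtronTerm, hpow_top, hpow_same, hpow_succ]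
  field_simp
  push_cast
  ring

theorem sum_mul_sub_shift_eq_of_recurrence (a : ℝ) (B : ℕ → ℕ → ℝ) (g : ℕ → ℝ) (n : ℕ)
    (hB0 : B n 0 = 0) (hBtop : B n (n + 1) = 0)
    (hBrec : ∀ k, 1 ≤ k → k ≤ n + 1 →
      B (n + 1) k = (-(k : ℝ) * a) * B n (k - 1) + ((k : ℝ) * a - (n : ℝ)) * B n k) :
    ∑ k ∈ Icc 1 n, B n k * ((a * k - n) * g k - (k + 1) * a * g (k + 1))
      = ∑ k ∈ Icc 1 (n + 1), B (n + 1) k * g k := by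
  have hshift : ∑ k ∈ Icc 1 n, (k + 1) * a * B n k * g (k + 1)
      = ∑ k ∈ Icc 1 (n + 1), k * a * B n (k - 1) * g k := by
    rw [← Ico_add_one_right_eq_Icc, ← Ico_add_one_right_eq_Icc,
      sum_eq_sum_Ico_succ_bot (show 1 < n + 1 + 1 by omega), ← sum_Ico_add']
    simp [hB0]
  have hdrop : ∑ k ∈ Icc 1 (n + 1), (k * a - n) * B n k * g k
      = ∑ k ∈ Icc 1 n, (k * a - n) * B n k * g k := by
    simp [sum_Icc_succ_top, hBtop]
  calc ∑ k ∈ Icc 1 n, B n k * ((a * k - n) * g k - (k + 1) * a * g (k + 1))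
      = ∑ k ∈ Icc 1 n, (k * a - n) * B n k * g k
          - ∑ k ∈ Icc 1 n, (k + 1) * a * B n k * g (k + 1) := by
        rw [← sum_sub_distrib]; exact sum_congr rfl fun k _ => by ring
    _ = ∑ k ∈ Icc 1 (n + 1), B (n + 1) k * g k := by
        rw [hshift, ← hdrop, ← sum_sub_distrib]
        refine sum_congr rfl fun k hk => ?_
        rw [hBrec k (mem_Icc.1 hk).1 (mem_Icc.1 hk).2]
        ring

theorem hasDerivAt_sum_sigtronTerm (a : ℝ) (B : ℕ → ℕ → ℝ) (n : ℕ)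
    (hB0 : B n 0 = 0) (hBtop : B n (n + 1) = 0)
    (hBrec : ∀ k, 1 ≤ k → k ≤ n + 1 →
      B (n + 1) k = (-(k : ℝ) * a) * B n (k - 1) + ((k : ℝ) * a - (n : ℝ)) * B n k)
    {y : ℝ} (hy : 0 < y) :
    HasDerivAt (fun t => ∑ k ∈ Icc 1 n, B n k * sigtronTerm a n k t)
      (∑ k ∈ Icc 1 (n + 1), B (n + 1) k * sigtronTerm a (n + 1) k y) y := by
  rw [← sum_mul_sub_shift_eq_of_recurrence a B (fun k => sigtronTerm a (n + 1) k y) n hB0 hBtop hBrec]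
  exact HasDerivAt.fun_sum fun k _ => (hasDerivAt_sigtronTerm a n k hy).const_mul (B n k)

theorem iteratedDerivWithin_succ_eq_of_hasDerivAt {𝕜 F : Type*} [NontriviallyNormedField 𝕜]
    [NormedAddCommGroup F] [NormedSpace 𝕜 F] {n : ℕ} {f g : 𝕜 → F} {g' : F} {s : Set 𝕜}
    {x : 𝕜} (hs : IsOpen s) (hx : x ∈ s) (hf : Set.EqOn (iteratedDerivWithin n f s) g s)
    (hg : HasDerivAt g g' x) :
    iteratedDerivWithin (n + 1) f s x = g' := by
  rw [iteratedDerivWithin_succ, derivWithin_of_isOpen hs hx]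
  exact (hg.congr_of_eventuallyEq (hf.eventuallyEq_of_mem (hs.mem_nhds hx))).deriv

/-- Fix `a ∈ ℝ` and let `B : ℕ → ℕ → ℝ` satisfy `B 1 1 = −a`,
`B n 0 = 0`, `B n k = 0` for `k > n`, and the recurrence
`B (n+1) k = (−k·a)·B n (k−1) + (k·a − n)·B n k` for `1 ≤ k ≤ n+1` (`n ≥ 1`).
Then for every `n ≥ 1` and `y > 0`, the `n`-th derivative within `(0,∞)` of
`g(y) = 1/(1 + y^a)` equals `Σ_{k=1}^n B n k · y^{a·k−n}/(1+y^a)^{k+1}`. -/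
theorem sigtron_stmt9 (a : ℝ) (B : ℕ → ℕ → ℝ)
    (hB11 : B 1 1 = -a)
    (hB0 : ∀ n, 1 ≤ n → B n 0 = 0)
    (hBtop : ∀ n k, 1 ≤ n → n < k → B n k = 0)
    (hBrec : ∀ n k, 1 ≤ n → 1 ≤ k → k ≤ n + 1 →
      B (n + 1) k = (-(k : ℝ) * a) * B n (k - 1) + ((k : ℝ) * a - (n : ℝ)) * B n k)
    (n : ℕ) (hn : 1 ≤ n) (y : ℝ) (hy : 0 < y) :
    iteratedDerivWithin n (fun t : ℝ => 1 / (1 + t ^ a)) (Set.Ioi (0 : ℝ)) y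
      = ∑ k ∈ Finset.Icc 1 n, B n k * y ^ (a * (k : ℝ) - (n : ℝ)) / (1 + y ^ a) ^ (k + 1) := by
  suffices ∀ m, 1 ≤ m → Set.EqOn (iteratedDerivWithin m (fun t : ℝ => 1 / (1 + t ^ a)) (Set.Ioi 0))
      (fun t => ∑ k ∈ Icc 1 m, B m k * sigtronTerm a m k t) (Set.Ioi 0) by
    simpa only [sigtronTerm, mul_div_assoc] using this n hn hy
  intro m hm
  induction m, hm using Nat.le_induction with
  | base =>
    intro x hx
    have hg : Set.EqOn (iteratedDerivWithin 0 (fun t : ℝ => 1 / (1 + t ^ a)) (Set.Ioi 0))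
        (sigtronTerm a 0 0) (Set.Ioi 0) := fun t _ => by simp [sigtronTerm]
    refine iteratedDerivWithin_succ_eq_of_hasDerivAt isOpen_Ioi hx hg
      ((hasDerivAt_sigtronTerm a 0 0 hx).congr_deriv ?_)
    simp [hB11]
  | succ m hm ih =>
    intro x hx
    exact iteratedDerivWithin_succ_eq_of_hasDerivAt isOpen_Ioi hx ih
      (hasDerivAt_sum_sigtronTerm a B m (hB0 m hm) (hBtop m (m + 1) hm m.lt_succ_self)
        (hBrec m · hm) hx)
end

section
/- Let α ∈ (0,2) with α ≠ 1 and c > 0, and let x lie in the interior of dom(σ_{α,c}) (i.e., x < −c_α if α < 1, and x > −c_α if α > 1). Then the second derivative of SIGTRON at x equals s_{α,c}''(x) = −α·c·E^{2α−1}/(c + E)² + 2·c·E^{2α}/(c + E)³, where E = exp_{α,c}(−x) = c·(1 + x/c_α)^{1/(1−α)}. -/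
/-!
Write `E(x) = exp_{α,c}(-x)`, so that `σ_{α,c} = c / (c + E)` on the interior of the domain.
Since `1 / c_α = (α - 1) c^{α - 1}`, differentiating `c (1 - x / c_α)^{1/(1-α)}` gives
`exp_{α,c}' = exp_{α,c}^α`, hence `E' = -E^α`. With this,
`σ' = c E^α / (c + E)^2`, and one more application of the quotient rule gives the formula.
-/

open Filter Topology

section

variable {E : ℝ → ℝ} {α c x : ℝ}

theorem hasDerivAt_const_div_const_add (hE : HasDerivAt E (-E x ^ α) x) (hcE : c + E x ≠ 0) :
    HasDerivAt (fun y => c / (c + E y)) (c * E x ^ α / (c + E x) ^ 2) x :=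
  ((hasDerivAt_const x c).div (hE.const_add c) hcE).congr_deriv (by ring)

theorem hasDerivAt_const_mul_rpow_div_sq (hE : HasDerivAt E (-E x ^ α) x) (hEx : 0 < E x)
    (hcE : c + E x ≠ 0) :
    HasDerivAt (fun y => c * E y ^ α / (c + E y) ^ 2)
      (-α * c * E x ^ (2 * α - 1) / (c + E x) ^ 2 + 2 * c * E x ^ (2 * α) / (c + E x) ^ 3) x := by
  have hnum := (hE.rpow_const (p := α) (Or.inl hEx.ne')).const_mul c
  have hden := (hE.const_add c).pow 2
  refine (hnum.div hden (pow_ne_zero 2 hcE)).congr_deriv ?_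
  have h2 : E x ^ (2 * α) = E x ^ α * E x ^ α := by rw [two_mul, Real.rpow_add hEx]
  have h21 : E x ^ (2 * α - 1) = E x ^ α * E x ^ (α - 1) := by
    rw [← Real.rpow_add hEx]; ring_nf
  rw [h2, h21]
  simp only [Pi.pow_apply]
  field_simp
  ring

theorem iteratedDeriv_two_eq_of_eventuallyEq_const_div_const_add {f : ℝ → ℝ} (hc : 0 ≤ c)
    (hf : f =ᶠ[𝓝 x] fun y => c / (c + E y))
    (hE : ∀ᶠ y in 𝓝 x, 0 < E y ∧ HasDerivAt E (-E y ^ α) y) :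
    iteratedDeriv 2 f x
      = -α * c * E x ^ (2 * α - 1) / (c + E x) ^ 2 + 2 * c * E x ^ (2 * α) / (c + E x) ^ 3 := by
  have hderiv : deriv f =ᶠ[𝓝 x] fun y => c * E y ^ α / (c + E y) ^ 2 :=
    hf.deriv.trans <|
      hE.mono fun y ⟨hEy, hy⟩ => (hasDerivAt_const_div_const_add hy (by positivity)).deriv
  obtain ⟨hEx, hx⟩ := hE.self_of_nhds
  rw [iteratedDeriv_succ', iteratedDeriv_one, hderiv.deriv_eq,
    (hasDerivAt_const_mul_rpow_div_sq hx hEx (by positivity)).deriv]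

end

section

variable {α c x : ℝ}

/-- The extended exponential `exp_{α,c}`. -/
noncomputable def expExt (α c x : ℝ) : ℝ := c * (1 - x / cA α c) ^ ((1 : ℝ) / (1 - α))

lemma expExt_neg : expExt α c (-x) = c * (1 + x / cA α c) ^ ((1 : ℝ) / (1 - α)) := by
  rw [expExt, neg_div, sub_neg_eq_add]

lemma inv_cA (hc : 0 < c) : (cA α c)⁻¹ = (α - 1) * c ^ (α - 1) := by
  rw [cA, inv_div, div_eq_mul_inv, ← Real.rpow_neg hc.le, neg_sub]

lemma cA_neg (hc : 0 < c) (hα : α < 1) : cA α c < 0 :=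
  div_neg_of_pos_of_neg (Real.rpow_pos_of_pos hc _) (by linarith)

lemma cA_pos (hc : 0 < c) (hα : 1 < α) : 0 < cA α c :=
  div_pos (Real.rpow_pos_of_pos hc _) (by linarith)

theorem hasDerivAt_expExt (hc : 0 < c) (hα : α ≠ 1) (hx : 0 < 1 - x / cA α c) :
    HasDerivAt (expExt α c) (expExt α c x ^ α) x := by
  set p : ℝ := 1 / (1 - α)
  have h1α : 1 - α ≠ 0 := sub_ne_zero.mpr hα.symm
  have hbase : HasDerivAt (fun y => 1 - y / cA α c) (-(cA α c)⁻¹) x := by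
    simpa [div_eq_mul_inv] using ((hasDerivAt_id x).mul_const (cA α c)⁻¹).const_sub 1
  refine ((hbase.rpow_const (p := p) (Or.inl hx.ne')).const_mul c).congr_deriv ?_
  have hp : p - 1 = p * α := by simp only [p]; field_simp; ring
  have hcα : c ^ α = c ^ (α - 1) * c := by
    rw [← Real.rpow_add_one hc.ne']; ring_nf
  rw [expExt, Real.mul_rpow hc.le (Real.rpow_nonneg hx.le _), ← Real.rpow_mul hx.le, ← hp,
    inv_cA hc, hcα]
  simp only [p]; field_simp; ring

theorem hasDerivAt_expExt_neg (hc : 0 < c) (hα : α ≠ 1) (hx : 0 < 1 + x / cA α c) :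
    HasDerivAt (fun y => expExt α c (-y)) (-expExt α c (-x) ^ α) x :=
  ((hasDerivAt_expExt hc hα (by rwa [neg_div, sub_neg_eq_add])).comp x
    (hasDerivAt_neg x)).congr_deriv (mul_neg_one _)

/-- `{x | 0 < 1 + x / c_α}` is the interior of `dom(σ_{α,c})`. -/
lemma one_add_div_cA_pos_iff (hc : 0 < c) (hα : α ≠ 1) :
    0 < 1 + x / cA α c ↔ (α < 1 → x < -cA α c) ∧ (1 < α → -cA α c < x) := by
  rw [← neg_lt_iff_pos_add']
  rcases hα.lt_or_gt with h | h
  · rw [lt_div_iff_of_neg (cA_neg hc h)]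
    simp [h, h.le.not_gt]
  · rw [lt_div_iff₀ (cA_pos hc h)]
    simp [h, h.not_gt]

lemma sigtron_eq_const_div_const_add_expExt (hc : 0 < c) (hα : α ≠ 1) (hx : 0 < 1 + x / cA α c) :
    sigtron α c x = c / (c + expExt α c (-x)) := by
  have hdom := (one_add_div_cA_pos_iff hc hα).mp hx
  rw [expExt_neg, ← mul_one_add, div_mul_cancel_left₀ hc.ne', one_div]
  unfold sigtron
  split_ifs <;> grind

end

theorem sigtron_stmt10_general (α c : ℝ) (hα1 : α ≠ 1)
    (hc : 0 < c) (x : ℝ)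
    (hx : (α < 1 → x < -(cA α c)) ∧ (1 < α → -(cA α c) < x))
    (E : ℝ) (hE : E = c * (1 + x / cA α c) ^ ((1 : ℝ) / (1 - α))) :
    iteratedDeriv 2 (sigtron α c) x
      = -α * c * E ^ (2 * α - 1) / (c + E) ^ 2 + 2 * c * E ^ (2 * α) / (c + E) ^ 3 := by
  have hdom : ∀ᶠ y in 𝓝 x, 0 < 1 + y / cA α c :=
    (isOpen_lt continuous_const (by fun_prop)).mem_nhds ((one_add_div_cA_pos_iff hc hα1).mpr hx)
  have hsig : sigtron α c =ᶠ[𝓝 x] fun y => c / (c + expExt α c (-y)) :=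
    hdom.mono fun y hy => sigtron_eq_const_div_const_add_expExt hc hα1 hy
  have hexp : ∀ᶠ y in 𝓝 x, 0 < expExt α c (-y) ∧
      HasDerivAt (fun y => expExt α c (-y)) (-expExt α c (-y) ^ α) y :=
    hdom.mono fun y hy => ⟨by rw [expExt_neg]; positivity, hasDerivAt_expExt_neg hc hα1 hy⟩
  rw [iteratedDeriv_two_eq_of_eventuallyEq_const_div_const_add hc.le hsig hexp, expExt_neg, ← hE]

/-- For `α ∈ (0,2)`, `α ≠ 1`, `c > 0` and `x` in the interior of
`dom(σ_{α,c})` (i.e. `x < −c_α` if `α < 1`, and `x > −c_α` if `α > 1`), the second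
derivative of SIGTRON at `x` equals
`−α·c·E^{2α−1}/(c+E)² + 2·c·E^{2α}/(c+E)³` where `E = c·(1 + x/c_α)^{1/(1−α)}`. -/
theorem sigtron_stmt10 (α c : ℝ) (hα : α ∈ Set.Ioo (0 : ℝ) 2) (hα1 : α ≠ 1)
    (hc : 0 < c) (x : ℝ)
    (hx : (α < 1 → x < -(cA α c)) ∧ (1 < α → -(cA α c) < x))
    (E : ℝ) (hE : E = c * (1 + x / cA α c) ^ ((1 : ℝ) / (1 - α))) :
    iteratedDeriv 2 (sigtron α c) x
      = -α * c * E ^ (2 * α - 1) / (c + E) ^ 2 + 2 * c * E ^ (2 * α) / (c + E) ^ 3 :=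
  sigtron_stmt10_general α c hα1 hc x hx E hE
end

section
/- Let α ∈ [0,1) and c > 0, so c_α = c^{1−α}/(α−1) < 0. Define L : ℝ → ℝ by L(x) = c_α·F(1 + x/c_α; 1−α) − c_α − x for x ≤ −c_α, and L(x) = 0 for x > −c_α, where F(z;b) = ∫₀^z 1/(1 + t^{1/b}) dt. Then L is differentiable at every x ∈ ℝ and L'(x) = s_{α,c}(x) − 1 for all x ∈ ℝ; i.e., L is the virtual SIGTRON-induced loss function for α ∈ [0,1). -/
/-- `F(z;b) = ∫₀^z 1/(1 + t^{1/b}) dt`. -/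
noncomputable def Fint (z b : ℝ) : ℝ := ∫ t in (0 : ℝ)..z, 1 / (1 + t ^ ((1 : ℝ) / b))


/-- Virtual SIGTRON-induced loss for `α ∈ [0,1)`:
`L(x) = c_α·F(1+x/c_α; 1−α) − c_α − x` for `x ≤ −c_α`, and `L(x) = 0` otherwise. -/
noncomputable def lossLT (α c : ℝ) (x : ℝ) : ℝ :=
  if x ≤ -(cA α c) then cA α c * Fint (1 + x / cA α c) (1 - α) - cA α c - x else 0

/-! On `x < -c_α` the loss is `c_α F(1 + x/c_α) - c_α - x`, whose derivative is
`c_α · F'(1 + x/c_α) / c_α - 1 = s(x) - 1` by the fundamental theorem of calculus; on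
`x > -c_α` it is `0 = 1 - 1`. At the junction `x = -c_α` the argument `1 + x/c_α` vanishes, so
both branches have value `0` and derivative `0`, and the one-sided derivatives glue. -/

theorem hasDerivAt_ite_le {F : Type*} [NormedAddCommGroup F] [NormedSpace ℝ F]
    {f g f' g' : ℝ → F} {a : ℝ} (hf : ∀ x ≤ a, HasDerivAt f (f' x) x)
    (hg : ∀ x ≥ a, HasDerivAt g (g' x) x) (hfg : f a = g a) (hfg' : f' a = g' a) (x : ℝ) :
    HasDerivAt (fun y => if y ≤ a then f y else g y) (if x ≤ a then f' x else g' x) x := by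
  rcases lt_trichotomy x a with hx | rfl | hx
  · rw [if_pos hx.le]
    refine (hf x hx.le).congr_of_eventuallyEq ?_
    filter_upwards [Iio_mem_nhds hx] with y hy
    rw [if_pos hy.le]
  · rw [if_pos le_rfl]
    set h := fun y => if y ≤ x then f y else g y
    have hleft : HasDerivWithinAt h (f' x) (Set.Iic x) x :=
      (hf x le_rfl).hasDerivWithinAt.congr_of_mem (fun y hy => if_pos hy) Set.self_mem_Iic
    have hright : HasDerivWithinAt h (f' x) (Set.Ici x) x := by
      rw [hfg']
      refine (hg x le_rfl).hasDerivWithinAt.congr (fun y hy => ?_) ((if_pos le_rfl).trans hfg)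
      rcases (Set.mem_Ici.mp hy).eq_or_lt with rfl | hy
      · exact (if_pos le_rfl).trans hfg
      · exact if_neg (not_le.mpr hy)
    simpa only [Set.Iic_union_Ici, hasDerivWithinAt_univ] using hleft.union hright
  · rw [if_neg (not_le.mpr hx)]
    refine (hg x hx.le).congr_of_eventuallyEq ?_
    filter_upwards [Ioi_mem_nhds hx] with y hy
    rw [if_neg (not_le.mpr hy)]

theorem hasDerivAt_Fint {z b : ℝ} (hb : 0 ≤ b) (hz : 0 ≤ z) :
    HasDerivAt (fun u => Fint u b) (1 / (1 + z ^ (1 / b))) z := by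
  have hcont : Continuous fun t : ℝ => t ^ (1 / b) :=
    Real.continuous_rpow_const (one_div_nonneg.mpr hb)
  have hden {t : ℝ} (ht : 0 ≤ t) : 1 + t ^ (1 / b) ≠ 0 := by
    have := Real.rpow_nonneg ht (1 / b)
    positivity
  have hint : IntervalIntegrable (fun t : ℝ => 1 / (1 + t ^ (1 / b))) MeasureTheory.volume 0 z :=
    ContinuousOn.intervalIntegrable <|
      continuousOn_const.div (continuous_const.add hcont).continuousOn fun t ht =>
        hden (by rw [Set.uIcc_of_le hz] at ht; exact ht.1)
  have hmeas : Measurable fun t : ℝ => 1 / (1 + t ^ (1 / b)) := by fun_prop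
  exact intervalIntegral.integral_hasDerivAt_right hint
    hmeas.aestronglyMeasurable.stronglyMeasurableAtFilter
    (continuousAt_const.div (continuous_const.add hcont).continuousAt (hden hz))

theorem hasDerivAt_lossBranch {k b x : ℝ} (hk : k ≠ 0) (hb : 0 ≤ b) (hx : 0 ≤ 1 + x / k) :
    HasDerivAt (fun y => k * Fint (1 + y / k) b - k - y)
      (1 / (1 + (1 + x / k) ^ (1 / b)) - 1) x := by
  have hinner : HasDerivAt (fun y => 1 + y / k) (1 / k) x := by
    simpa using ((hasDerivAt_id x).div_const k).const_add 1
  have h := ((((hasDerivAt_Fint hb hx).comp x hinner).const_mul k).sub_const k).sub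
    (hasDerivAt_id x)
  rwa [mul_comm _ (1 / k), ← mul_assoc, mul_one_div_cancel hk, one_mul] at h

/-- For `α ∈ [0,1)` and `c > 0`, the function `L = lossLT α c` is
differentiable at every `x ∈ ℝ` with `L'(x) = s_{α,c}(x) − 1`. -/
theorem sigtron_stmt13 (α c : ℝ) (hα : α ∈ Set.Ico (0 : ℝ) 1) (hc : 0 < c) (x : ℝ) :
    HasDerivAt (lossLT α c) (sigtron α c x - 1) x := by
  have hk : cA α c < 0 :=
    div_neg_of_pos_of_neg (Real.rpow_pos_of_pos hc _) (by linarith [hα.2])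
  have hb : 0 < 1 - α := by linarith [hα.2]
  have hbranch {y : ℝ} : y ≤ -cA α c ↔ 0 ≤ 1 + y / cA α c := by
    rw [← neg_le_iff_add_nonneg', le_div_iff_of_neg hk, neg_one_mul]
  have hjunction : 1 + -cA α c / cA α c = 0 := by
    rw [neg_div, div_self hk.ne]; ring
  have hloss := hasDerivAt_ite_le (a := -cA α c)
    (f := fun y => cA α c * Fint (1 + y / cA α c) (1 - α) - cA α c - y) (g := fun _ => 0)
    (fun y hy => hasDerivAt_lossBranch hk.ne hb.le (hbranch.mp hy))
    (fun y _ => hasDerivAt_const y 0)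
    (by simp [hjunction, Fint])
    (by rw [hjunction, Real.zero_rpow (one_div_pos.mpr hb).ne']; norm_num) x
  have hsigtron : sigtron α c x - 1 =
      if x ≤ -cA α c then 1 / (1 + (1 + x / cA α c) ^ (1 / (1 - α))) - 1 else 0 := by
    split_ifs with hx <;> simp [sigtron, hα.2.ne, hα.2, hx]
  rw [hsigtron]
  exact hloss
end

section
/- For α ∈ [0,1) ∪ (1,2] and c > 0, the virtual SIGTRON-induced loss function L_{α,c}^S is a convex function on ℝ. (Case α ∈ (1,2]: L(x) = −c_α·F(1 + x/c_α; α−1) + c_α for x ≥ −c_α and L(x) = −x for x < −c_α. Case α ∈ [0,1): L(x) = c_α·F(1 + x/c_α; 1−α) − c_α − x for x ≤ −c_α and L(x) = 0 for x > −c_α.) -/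
/-- Virtual SIGTRON-induced loss function `L_{α,c}^S`: for `α > 1`,
`L(x) = −c_α·F(1+x/c_α; α−1) + c_α` if `x ≥ −c_α` and `L(x) = −x` otherwise;
for `α < 1`, `L(x) = c_α·F(1+x/c_α; 1−α) − c_α − x` if `x ≤ −c_α`
and `L(x) = 0` otherwise. -/
noncomputable def sigtronLoss (α c : ℝ) (x : ℝ) : ℝ :=
  if 1 < α then
    (if -(cA α c) ≤ x then -(cA α c) * Fint (1 + x / cA α c) (α - 1) + cA α c else -x)
  else
    (if x ≤ -(cA α c) then cA α c * Fint (1 + x / cA α c) (1 - α) - cA α c - x else 0)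


open Set MeasureTheory intervalIntegral Filter

lemma gpos {p t : ℝ} (ht : 0 ≤ t) : 0 < 1 + t ^ p := by
  have := Real.rpow_nonneg ht p; linarith

lemma gcont {p : ℝ} (hp : 0 < p) {t : ℝ} (ht : 0 ≤ t) :
    ContinuousAt (fun t : ℝ => 1 / (1 + t ^ p)) t := by
  have h1 : ContinuousAt (fun t : ℝ => t ^ p) t :=
    Real.continuousAt_rpow_const t p (Or.inr hp.le)
  exact continuousAt_const.div (continuousAt_const.add h1) (gpos ht).ne'

lemma fint_hasDerivAt {b : ℝ} (hb : 0 < b) {z : ℝ} (hz : 0 ≤ z) :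
    HasDerivAt (fun z => Fint z b) (1 / (1 + z ^ ((1 : ℝ) / b))) z := by
  have hp : 0 < (1 : ℝ) / b := by positivity
  have hmeasg : Measurable (fun t : ℝ => 1 / (1 + t ^ ((1 : ℝ) / b))) :=
    measurable_const.div (measurable_const.add (measurable_id.pow_const _))
  have hint : IntervalIntegrable (fun t : ℝ => 1 / (1 + t ^ ((1 : ℝ) / b))) volume 0 z := by
    apply ContinuousOn.intervalIntegrable
    rw [Set.uIcc_of_le hz]
    exact fun t ht => (gcont hp ht.1).continuousWithinAt
  exact integral_hasDerivAt_right hint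
    (hmeasg.stronglyMeasurable.stronglyMeasurableAtFilter) (gcont hp hz)

lemma fint_zero (b : ℝ) : Fint 0 b = 0 := intervalIntegral.integral_same

lemma case1 {α c : ℝ} (hα : α ∈ Set.Ico (0 : ℝ) 1) (hc : 0 < c) :
    ConvexOn ℝ Set.univ (sigtronLoss α c) := by
  obtain ⟨hα0, hα1⟩ := hα
  set k : ℝ := cA α c with hkdef
  have hk : k < 0 := div_neg_of_pos_of_neg (Real.rpow_pos_of_pos hc _) (by linarith)
  have hb : 0 < 1 - α := by linarith
  set p : ℝ := (1 : ℝ) / (1 - α) with hpdef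
  have hp : 0 < p := by positivity
  set φ : ℝ → ℝ := fun x =>
    if x ≤ -k then 1 / (1 + (1 + x / k) ^ p) - 1 else 0 with hφdef
  set h : ℝ → ℝ := fun x => k * Fint (1 + x / k) (1 - α) - k - x with hhdef
  have hL : sigtronLoss α c = fun x => if x ≤ -k then h x else 0 := by
    funext x; simp only [sigtronLoss, if_neg (by linarith : ¬ (1 : ℝ) < α), hhdef, hkdef]
  have hu : ∀ {x : ℝ}, x ≤ -k → 0 ≤ 1 + x / k := by
    intro x hx
    have : -1 ≤ x / k := by rw [le_div_iff_of_neg hk]; linarith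
    linarith
  have hh : ∀ x : ℝ, x ≤ -k → HasDerivAt h (1 / (1 + (1 + x / k) ^ p) - 1) x := by
    intro x hx
    have inner : HasDerivAt (fun x : ℝ => 1 + x / k) (1 / k) x :=
      ((hasDerivAt_id x).div_const k).const_add 1
    have comp := (fint_hasDerivAt hb (hu hx)).comp x inner
    have hthis : HasDerivAt h (k * ((1 / (1 + (1 + x / k) ^ p)) * (1 / k)) - 1) x :=
      ((comp.const_mul k).sub_const k).sub (hasDerivAt_id x)
    have heq : k * ((1 / (1 + (1 + x / k) ^ p)) * (1 / k)) =
        1 / (1 + (1 + x / k) ^ p) := by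
      rw [mul_comm (1 / (1 + (1 + x / k) ^ p)), ← mul_assoc, mul_one_div,
        mul_one_div, div_self hk.ne]
    exact heq ▸ hthis
  have hφk : (1 : ℝ) + -k / k = 0 := by
    rw [neg_div, div_self hk.ne]; ring
  have hhk : h (-k) = 0 := by
    simp only [hhdef]
    rw [hφk, fint_zero]
    ring
  have hD : ∀ x : ℝ, HasDerivAt (sigtronLoss α c) (φ x) x := by
    intro x
    rcases lt_trichotomy x (-k) with hx | hx | hx
    · have hval : φ x = 1 / (1 + (1 + x / k) ^ p) - 1 := if_pos hx.le
      rw [hval]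
      apply (hh x hx.le).congr_of_eventuallyEq
      filter_upwards [Iio_mem_nhds hx] with y hy
      rw [hL]; exact if_pos (le_of_lt hy)
    · subst hx
      have hval : φ (-k) = 0 := by
        rw [hφdef]; simp only [if_pos le_rfl, hφk,
          Real.zero_rpow hp.ne', add_zero, div_one]
        ring
      rw [hval]
      have hleft : HasDerivWithinAt (sigtronLoss α c) 0 (Set.Iic (-k)) (-k) := by
        have hd0 : HasDerivAt h 0 (-k) := by
          have hd := hh (-k) le_rfl
          rw [hφk, Real.zero_rpow hp.ne', add_zero, div_one, sub_self] at hd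
          exact hd
        apply hd0.hasDerivWithinAt.congr _ (by rw [hL]; simp)
        intro y hy
        rw [hL]; exact if_pos (Set.mem_Iic.mp hy)
      have hright : HasDerivWithinAt (sigtronLoss α c) 0 (Set.Ici (-k)) (-k) := by
        have : HasDerivWithinAt (fun _ : ℝ => (0 : ℝ)) 0 (Set.Ici (-k)) (-k) :=
          (hasDerivAt_const (-k) (0 : ℝ)).hasDerivWithinAt
        apply this.congr _ (by rw [hL]; simp [hhk])
        intro y hy
        rcases eq_or_lt_of_le (Set.mem_Ici.mp hy) with rfl | hy'
        · rw [hL]; simp [hhk]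
        · rw [hL]; exact if_neg (not_le.mpr hy')
      have := hleft.union hright
      rwa [Set.Iic_union_Ici, hasDerivWithinAt_univ] at this
    · have hval : φ x = 0 := if_neg (not_le.mpr hx)
      rw [hval]
      apply (hasDerivAt_const x (0 : ℝ)).congr_of_eventuallyEq
      filter_upwards [Ioi_mem_nhds hx] with y hy
      rw [hL]; exact if_neg (not_le.mpr hy)
  have hmono : Monotone φ := by
    intro x y hxy
    simp only [hφdef]
    by_cases hy : y ≤ -k
    · rw [if_pos hy, if_pos (hxy.trans hy)]
      have hvu : 1 + y / k ≤ 1 + x / k := by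
        have hinv : k⁻¹ ≤ 0 := inv_nonpos.mpr hk.le
        have := mul_le_mul_of_nonpos_right hxy hinv
        rw [div_eq_mul_inv, div_eq_mul_inv]
        linarith
      have h1 : (1 + y / k) ^ p ≤ (1 + x / k) ^ p :=
        Real.rpow_le_rpow (hu hy) hvu hp.le
      have h2 : (0:ℝ) < 1 + (1 + y / k) ^ p := gpos (hu hy)
      have h3 : 1 / (1 + (1 + x / k) ^ p) ≤ 1 / (1 + (1 + y / k) ^ p) :=
        one_div_le_one_div_of_le h2 (by linarith)
      linarith
    · rw [if_neg hy]
      by_cases hx : x ≤ -k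
      · rw [if_pos hx]
        have h2 : (1 : ℝ) ≤ 1 + (1 + x / k) ^ p := by
          have := Real.rpow_nonneg (hu hx) p; linarith
        have : 1 / (1 + (1 + x / k) ^ p) ≤ 1 := by
          rw [div_le_one (by linarith)]; exact h2
        linarith
      · rw [if_neg hx]
  exact Monotone.convexOn_univ_of_deriv (fun x => (hD x).differentiableAt)
    (by rw [funext fun x => (hD x).deriv]; exact hmono)


lemma case2 {α c : ℝ} (hα : α ∈ Set.Ioc (1 : ℝ) 2) (hc : 0 < c) :
    ConvexOn ℝ Set.univ (sigtronLoss α c) := by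
  obtain ⟨hα1, hα2⟩ := hα
  set k : ℝ := cA α c with hkdef
  have hk : 0 < k := div_pos (Real.rpow_pos_of_pos hc _) (by linarith)
  have hb : 0 < α - 1 := by linarith
  set p : ℝ := (1 : ℝ) / (α - 1) with hpdef
  have hp : 0 < p := by positivity
  set φ : ℝ → ℝ := fun x =>
    if -k ≤ x then -(1 / (1 + (1 + x / k) ^ p)) else -1 with hφdef
  set h : ℝ → ℝ := fun x => -k * Fint (1 + x / k) (α - 1) + k with hhdef
  have hL : sigtronLoss α c = fun x => if -k ≤ x then h x else -x := by
    funext x; simp only [sigtronLoss, if_pos hα1, hhdef, hkdef]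
  have hu : ∀ {x : ℝ}, -k ≤ x → 0 ≤ 1 + x / k := by
    intro x hx
    have : -1 ≤ x / k := by rw [le_div_iff₀ hk]; linarith
    linarith
  -- derivative of h where defined
  have hh : ∀ x : ℝ, -k ≤ x → HasDerivAt h (-(1 / (1 + (1 + x / k) ^ p))) x := by
    intro x hx
    have inner : HasDerivAt (fun x : ℝ => 1 + x / k) (1 / k) x :=
      ((hasDerivAt_id x).div_const k).const_add 1
    have comp := (fint_hasDerivAt hb (hu hx)).comp x inner
    have : HasDerivAt h (-k * ((1 / (1 + (1 + x / k) ^ p)) * (1 / k))) x :=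
      (comp.const_mul (-k)).add_const k
    have hA : (1 + (1 + x / k) ^ p) ≠ 0 := (gpos (hu hx)).ne'
    have heq : -k * ((1 / (1 + (1 + x / k) ^ p)) * (1 / k)) =
        -(1 / (1 + (1 + x / k) ^ p)) := by
      rw [mul_comm (1 / (1 + (1 + x / k) ^ p)), ← mul_assoc, mul_one_div,
        neg_mul, mul_one_div, div_self hk.ne', neg_div]
    exact heq ▸ this
  -- value of h at -k
  have hhk : h (-k) = k := by
    simp only [hhdef]
    rw [neg_div, div_self hk.ne', show (1 : ℝ) + -1 = 0 by ring, fint_zero]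
    ring
  have hφk : (1 : ℝ) + -k / k = 0 := by
    rw [neg_div, div_self hk.ne']; ring
  have hD : ∀ x : ℝ, HasDerivAt (sigtronLoss α c) (φ x) x := by
    intro x
    rcases lt_trichotomy x (-k) with hx | hx | hx
    · have hder : HasDerivAt (fun y : ℝ => -y) (-1) x := (hasDerivAt_id x).neg
      have : φ x = -1 := if_neg (not_le.mpr hx)
      rw [this]
      apply hder.congr_of_eventuallyEq
      filter_upwards [Iio_mem_nhds hx] with y hy
      rw [hL]; exact if_neg (not_le.mpr hy)
    · subst hx
      have hval : φ (-k) = -1 := by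
        rw [hφdef]; simp only [if_pos le_rfl, hφk,
          Real.zero_rpow hp.ne', add_zero, div_one]
      rw [hval]
      have hleft : HasDerivWithinAt (sigtronLoss α c) (-1) (Set.Iic (-k)) (-k) := by
        have : HasDerivWithinAt (fun y : ℝ => -y) (-1) (Set.Iic (-k)) (-k) :=
          ((hasDerivAt_id (-k)).neg).hasDerivWithinAt
        apply this.congr _ (by rw [hL]; simp [hhk])
        intro y hy
        rcases eq_or_lt_of_le (Set.mem_Iic.mp hy) with rfl | hy'
        · rw [hL]; simp [hhk]
        · rw [hL]; exact if_neg (not_le.mpr hy')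
      have hright : HasDerivWithinAt (sigtronLoss α c) (-1) (Set.Ici (-k)) (-k) := by
        have hd := hh (-k) le_rfl
        rw [hφk, Real.zero_rpow hp.ne', add_zero, div_one] at hd
        apply hd.hasDerivWithinAt.congr _ (by rw [hL]; simp)
        intro y hy
        rw [hL]; exact if_pos hy
      have := hleft.union hright
      rwa [Set.Iic_union_Ici, hasDerivWithinAt_univ] at this
    · have hval : φ x = -(1 / (1 + (1 + x / k) ^ p)) := if_pos hx.le
      rw [hval]
      apply (hh x hx.le).congr_of_eventuallyEq
      filter_upwards [Ioi_mem_nhds hx] with y hy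
      rw [hL]; exact if_pos (le_of_lt hy)
  have hmono : Monotone φ := by
    intro x y hxy
    simp only [hφdef]
    by_cases hx : -k ≤ x
    · rw [if_pos hx, if_pos (hx.trans hxy)]
      have huv : 1 + x / k ≤ 1 + y / k := by
        have : x / k ≤ y / k := by gcongr
        linarith
      have h1 : (1 + x / k) ^ p ≤ (1 + y / k) ^ p :=
        Real.rpow_le_rpow (hu hx) huv hp.le
      have h2 : (0:ℝ) < 1 + (1 + x / k) ^ p := gpos (hu hx)
      have h3 : 1 / (1 + (1 + y / k) ^ p) ≤ 1 / (1 + (1 + x / k) ^ p) :=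
        one_div_le_one_div_of_le h2 (by linarith)
      linarith
    · rw [if_neg hx]
      by_cases hy : -k ≤ y
      · rw [if_pos hy]
        have h2 : (1 : ℝ) ≤ 1 + (1 + y / k) ^ p := by
          have := Real.rpow_nonneg (hu hy) p; linarith
        have : 1 / (1 + (1 + y / k) ^ p) ≤ 1 := by
          rw [div_le_one (by linarith)]; exact h2
        linarith
      · rw [if_neg hy]
  exact Monotone.convexOn_univ_of_deriv (fun x => (hD x).differentiableAt)
    (by rw [funext fun x => (hD x).deriv]; exact hmono)

/-- For `α ∈ [0,1) ∪ (1,2]` and `c > 0`, the virtual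
SIGTRON-induced loss function `L_{α,c}^S` is convex on `ℝ`. -/
theorem sigtron_stmt15 (α c : ℝ)
    (hα : α ∈ Set.Ico (0 : ℝ) 1 ∪ Set.Ioc (1 : ℝ) 2) (hc : 0 < c) :
    ConvexOn ℝ Set.univ (sigtronLoss α c) := by
  rcases hα with h | h
  · exact case1 h hc
  · exact case2 h hc
end
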